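/- arXiv:2011.11494 — 2 statements merged into one kernel-verified Lean document; each statement's English description precedes it below -/
import Mathlib

section
/- For x in the open unit ball of ℝ^{m+1} and y in the closed unit ball, T_{-x}(T_x(y)) = y; that is, T_{-x} is the inverse of T_x on the closed unit ball. -/
open scoped RealInnerProductSpace

/-- The Möbius transformation of the ball with parameter `x`. -/
noncomputable def mobiusT {n : ℕ} (x y : EuclideanSpace ℝ (Fin n)) :
    EuclideanSpace ℝ (Fin n) :=
  (1 + 2 * ⟪x, y⟫ + ‖x‖ ^ 2 * ‖y‖ ^ 2)⁻¹ •
    ((1 + 2 * ⟪x, y⟫ + ‖y‖ ^ 2) • x + (1 - ‖x‖ ^ 2) • y)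

/-!
Write `T_x y = N_x(y) / D_x(y)`. Expanding `T_x y = c • x + d • y` one computes
`D_{-x}(T_x y) = (1 - ‖x‖²)² / D_x(y)` and `N_{-x}(T_x y) = ((1 - ‖x‖²)² / D_x(y)) • y`, so the two
scalars cancel as soon as `‖x‖ ≠ 1` and `D_x(y) ≠ 0`. By Cauchy–Schwarz `D_x(y) ≥ (1 - ‖x‖‖y‖)²`,
which is positive on the open ball times the closed ball.
-/

section

variable {E : Type*} [NormedAddCommGroup E] [InnerProductSpace ℝ E]

lemma real_inner_smul_add_smul (x y : E) (c d : ℝ) :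
    ⟪x, c • x + d • y⟫ = c * ‖x‖ ^ 2 + d * ⟪x, y⟫ := by
  rw [inner_add_right, real_inner_smul_right, real_inner_smul_right, real_inner_self_eq_norm_sq]

lemma norm_smul_add_smul_sq (x y : E) (c d : ℝ) :
    ‖c • x + d • y‖ ^ 2 = c ^ 2 * ‖x‖ ^ 2 + 2 * c * d * ⟪x, y⟫ + d ^ 2 * ‖y‖ ^ 2 := by
  rw [norm_add_sq_real, norm_smul, norm_smul, real_inner_smul_left, real_inner_smul_right,
    mul_pow, mul_pow, Real.norm_eq_abs, Real.norm_eq_abs, sq_abs, sq_abs]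
  ring

end

section

variable {n : ℕ} (x y : EuclideanSpace ℝ (Fin n))

noncomputable def mobiusDenom : ℝ := 1 + 2 * ⟪x, y⟫ + ‖x‖ ^ 2 * ‖y‖ ^ 2

noncomputable def mobiusNumer : EuclideanSpace ℝ (Fin n) :=
  (1 + 2 * ⟪x, y⟫ + ‖y‖ ^ 2) • x + (1 - ‖x‖ ^ 2) • y

lemma mobiusT_eq_inv_smul : mobiusT x y = (mobiusDenom x y)⁻¹ • mobiusNumer x y := rfl

lemma mobiusT_eq_smul_add_smul :
    mobiusT x y = ((1 + 2 * ⟪x, y⟫ + ‖y‖ ^ 2) / mobiusDenom x y) • x +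
      ((1 - ‖x‖ ^ 2) / mobiusDenom x y) • y := by
  simp only [mobiusT, mobiusDenom, smul_add, smul_smul, div_eq_inv_mul]

variable {x y}

lemma mobiusDenom_pos (h : ‖x‖ * ‖y‖ ≠ 1) :
    0 < mobiusDenom x y := by
  have hcs : -(‖x‖ * ‖y‖) ≤ ⟪x, y⟫ := (abs_le.1 (abs_real_inner_le_norm x y)).1
  have hsq : 0 < (1 - ‖x‖ * ‖y‖) ^ 2 := pow_two_pos_of_ne_zero (sub_ne_zero.2 h.symm)
  unfold mobiusDenom
  nlinarith

lemma mobiusDenom_neg_mobiusT (hD : mobiusDenom x y ≠ 0) :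
    mobiusDenom (-x) (mobiusT x y) = (1 - ‖x‖ ^ 2) ^ 2 / mobiusDenom x y := by
  rw [mobiusDenom, inner_neg_left, norm_neg, mobiusT_eq_smul_add_smul,
    real_inner_smul_add_smul, norm_smul_add_smul_sq]
  have hDdef : mobiusDenom x y = 1 + 2 * ⟪x, y⟫ + ‖x‖ ^ 2 * ‖y‖ ^ 2 := rfl
  generalize mobiusDenom x y = D at *
  field_simp
  rw [hDdef]
  ring

lemma mobiusNumer_neg_mobiusT (hD : mobiusDenom x y ≠ 0) :
    mobiusNumer (-x) (mobiusT x y) = ((1 - ‖x‖ ^ 2) ^ 2 / mobiusDenom x y) • y := by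
  rw [mobiusNumer, inner_neg_left, norm_neg, mobiusT_eq_smul_add_smul,
    real_inner_smul_add_smul, norm_smul_add_smul_sq]
  have hDdef : mobiusDenom x y = 1 + 2 * ⟪x, y⟫ + ‖x‖ ^ 2 * ‖y‖ ^ 2 := rfl
  generalize mobiusDenom x y = D at *
  match_scalars
  · field_simp
    rw [hDdef]
    ring
  · field_simp

theorem mobiusT_neg_mobiusT (hx : ‖x‖ ≠ 1) (hD : mobiusDenom x y ≠ 0) :
    mobiusT (-x) (mobiusT x y) = y := by
  have hscalar : (1 - ‖x‖ ^ 2) ^ 2 / mobiusDenom x y ≠ 0 := by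
    refine div_ne_zero (pow_ne_zero 2 (sub_ne_zero.2 ?_)) hD
    rwa [ne_comm, Ne, pow_eq_one_iff_of_nonneg (norm_nonneg x) two_ne_zero]
  rw [mobiusT_eq_inv_smul (-x), mobiusDenom_neg_mobiusT hD, mobiusNumer_neg_mobiusT hD,
    inv_smul_smul₀ hscalar]

end

theorem mobiusT_neg_inverse_general (m : ℕ)
    (x y : EuclideanSpace ℝ (Fin (m + 1))) (hx : ‖x‖ < 1) (hy : ‖y‖ ≤ 1) :
    mobiusT (-x) (mobiusT x y) = y := by
  have hxy : ‖x‖ * ‖y‖ < 1 :=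
    (mul_le_of_le_one_right (norm_nonneg x) hy).trans_lt hx
  exact mobiusT_neg_mobiusT hx.ne (mobiusDenom_pos hxy.ne).ne'

/-- `T_{-x}` inverts `T_x` on the closed unit ball. -/
theorem mobiusT_neg_inverse (m : ℕ) (hm : 1 ≤ m)
    (x y : EuclideanSpace ℝ (Fin (m + 1))) (hx : ‖x‖ < 1) (hy : ‖y‖ ≤ 1) :
    mobiusT (-x) (mobiusT x y) = y :=
  mobiusT_neg_inverse_general m x y hx hy
end

section
/- For a unit vector p ∈ S^m and t ∈ [0,1), the image of the hemisphere H_p = {y ∈ S^m : y·p ≤ 0} under the Möbius transformation T_{pt} is exactly the spherical cap {y ∈ S^m : y·p ≤ 2t/(1+t²)}. -/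
open scoped RealInnerProductSpace

/-!
On the unit sphere, `T_{cp}` moves `y` within the plane spanned by `p` and `y`, and the
height `s = ⟪y, p⟫` transforms by the one-dimensional Möbius map
`s ↦ (2c + (1 + c²) s) / (1 + 2cs + c²)`, which is increasing and sends `0` to `2c / (1 + c²)`.
Since `T_{-cp}` inverts `T_{cp}` on the sphere, the hemisphere `s ≤ 0` is mapped onto the cap.
-/

section MobiusOnSphere

variable {n : ℕ} {p y : EuclideanSpace ℝ (Fin n)}

lemma mobiusT_denom_pos {c s : ℝ} (hc : |c| < 1) (hs : |s| ≤ 1) :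
    0 < 1 + 2 * c * s + c ^ 2 := by
  obtain ⟨hc₁, hc₂⟩ := abs_lt.mp hc
  obtain ⟨hs₁, hs₂⟩ := abs_le.mp hs
  nlinarith [sq_nonneg (c + s),
    mul_pos (by linarith : (0 : ℝ) < 1 + c) (by linarith : (0 : ℝ) < 1 - c)]

lemma abs_inner_le_one_of_norm_eq_one (hp : ‖p‖ = 1) (hy : ‖y‖ = 1) : |⟪y, p⟫| ≤ 1 := by
  simpa [hp, hy] using abs_real_inner_le_norm y p

lemma mobiusT_smul_of_norm_eq_one (hp : ‖p‖ = 1) (hy : ‖y‖ = 1) (c : ℝ) :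
    mobiusT (c • p) y = (1 + 2 * c * ⟪y, p⟫ + c ^ 2)⁻¹ •
      ((2 * c * (1 + c * ⟪y, p⟫)) • p + (1 - c ^ 2) • y) := by
  have hcp : ‖c • p‖ ^ 2 = c ^ 2 := by rw [norm_smul, hp, mul_one, Real.norm_eq_abs, sq_abs]
  simp only [mobiusT, real_inner_smul_left, hcp, hy, real_inner_comm y p]
  match_scalars <;> ring

lemma inner_mobiusT_smul (hp : ‖p‖ = 1) (hy : ‖y‖ = 1) (c : ℝ) :
    ⟪mobiusT (c • p) y, p⟫ = (2 * c + (1 + c ^ 2) * ⟪y, p⟫) / (1 + 2 * c * ⟪y, p⟫ + c ^ 2) := by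
  have hpp : ⟪p, p⟫ = 1 := by rw [real_inner_self_eq_norm_sq, hp, one_pow]
  rw [mobiusT_smul_of_norm_eq_one hp hy]
  simp only [inner_smul_left, inner_add_left, hpp, RCLike.conj_to_real]
  ring

lemma norm_mobiusT_smul (hp : ‖p‖ = 1) (hy : ‖y‖ = 1) {c : ℝ} (hc : |c| < 1) :
    ‖mobiusT (c • p) y‖ = 1 := by
  have hD := mobiusT_denom_pos hc (abs_inner_le_one_of_norm_eq_one hp hy)
  have hpp : ⟪p, p⟫ = 1 := by rw [real_inner_self_eq_norm_sq, hp, one_pow]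
  have hyy : ⟪y, y⟫ = 1 := by rw [real_inner_self_eq_norm_sq, hy, one_pow]
  have hsq : ‖mobiusT (c • p) y‖ ^ 2 = 1 := by
    rw [← real_inner_self_eq_norm_sq, mobiusT_smul_of_norm_eq_one hp hy]
    simp only [inner_add_left, inner_add_right, real_inner_smul_left, real_inner_smul_right,
      hpp, hyy, real_inner_comm y p]
    field_simp
    ring
  exact (pow_eq_one_iff_of_nonneg (norm_nonneg _) two_ne_zero).mp hsq

lemma mobiusT_neg_smul_mobiusT_smul (hp : ‖p‖ = 1) (hy : ‖y‖ = 1) {c : ℝ} (hc : |c| < 1) :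
    mobiusT ((-c) • p) (mobiusT (c • p) y) = y := by
  have hD := mobiusT_denom_pos hc (abs_inner_le_one_of_norm_eq_one hp hy)
  have hc₂ : 1 - c ^ 2 ≠ 0 := (sub_pos.mpr ((sq_lt_one_iff_abs_lt_one c).mpr hc)).ne'
  rw [mobiusT_smul_of_norm_eq_one hp (norm_mobiusT_smul hp hy hc), inner_mobiusT_smul hp hy,
    mobiusT_smul_of_norm_eq_one hp hy]
  set s := ⟪y, p⟫
  set D := 1 + 2 * c * s + c ^ 2
  have hden : 1 + 2 * -c * ((2 * c + (1 + c ^ 2) * s) / D) + (-c) ^ 2 = (1 - c ^ 2) ^ 2 / D := by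
    field_simp
    ring
  rw [hden]
  match_scalars
  · field_simp
    ring
  · field_simp

lemma inner_mobiusT_smul_le_iff (hp : ‖p‖ = 1) (hy : ‖y‖ = 1) {c : ℝ} (hc : |c| < 1) :
    ⟪mobiusT (c • p) y, p⟫ ≤ 2 * c / (1 + c ^ 2) ↔ ⟪y, p⟫ ≤ 0 := by
  have hD := mobiusT_denom_pos hc (abs_inner_le_one_of_norm_eq_one hp hy)
  have hc₂ : 0 < (1 - c ^ 2) ^ 2 := pow_pos (sub_pos.mpr ((sq_lt_one_iff_abs_lt_one c).mpr hc)) 2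
  set s := ⟪y, p⟫
  have hgap : 2 * c * (1 + 2 * c * s + c ^ 2) - (2 * c + (1 + c ^ 2) * s) * (1 + c ^ 2) =
      -s * (1 - c ^ 2) ^ 2 := by ring
  rw [inner_mobiusT_smul hp hy, div_le_div_iff₀ hD (by positivity), ← sub_nonneg, hgap,
    mul_nonneg_iff_of_pos_right hc₂, neg_nonneg]

end MobiusOnSphere

theorem mobiusT_image_hemisphere_general (m : ℕ)
    (p : EuclideanSpace ℝ (Fin (m + 1))) (hp : ‖p‖ = 1) (t : ℝ)
    (ht : t ∈ Set.Ico (0 : ℝ) 1) :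
    mobiusT (t • p) '' {y | y ∈ Metric.sphere (0 : EuclideanSpace ℝ (Fin (m + 1))) 1 ∧ ⟪y, p⟫ ≤ 0}
      = {y | y ∈ Metric.sphere (0 : EuclideanSpace ℝ (Fin (m + 1))) 1 ∧
          ⟪y, p⟫ ≤ 2 * t / (1 + t ^ 2)} := by
  have ht₁ : |t| < 1 := abs_lt.mpr ⟨by linarith [ht.1], ht.2⟩
  ext z
  simp only [Set.mem_image, Set.mem_ofPred_eq, mem_sphere_iff_norm, sub_zero]
  constructor
  · rintro ⟨y, ⟨hy, hyp⟩, rfl⟩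
    exact ⟨norm_mobiusT_smul hp hy ht₁, (inner_mobiusT_smul_le_iff hp hy ht₁).mpr hyp⟩
  · rintro ⟨hz, hzp⟩
    have ht₁' : |-t| < 1 := by rwa [abs_neg]
    have hinv : mobiusT (t • p) (mobiusT ((-t) • p) z) = z := by
      simpa using mobiusT_neg_smul_mobiusT_smul hp hz ht₁'
    have hy := norm_mobiusT_smul hp hz ht₁'
    refine ⟨_, ⟨hy, ?_⟩, hinv⟩
    rwa [← inner_mobiusT_smul_le_iff hp hy ht₁, hinv]

/-- the image of the hemisphere `{y ∈ Sᵐ : y·p ≤ 0}` under `T_{tp}`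
is the spherical cap `{y ∈ Sᵐ : y·p ≤ 2t/(1+t²)}`. -/
theorem mobiusT_image_hemisphere (m : ℕ) (hm : 1 ≤ m)
    (p : EuclideanSpace ℝ (Fin (m + 1))) (hp : ‖p‖ = 1) (t : ℝ)
    (ht : t ∈ Set.Ico (0 : ℝ) 1) :
    mobiusT (t • p) '' {y | y ∈ Metric.sphere (0 : EuclideanSpace ℝ (Fin (m + 1))) 1 ∧ ⟪y, p⟫ ≤ 0}
      = {y | y ∈ Metric.sphere (0 : EuclideanSpace ℝ (Fin (m + 1))) 1 ∧
          ⟪y, p⟫ ≤ 2 * t / (1 + t ^ 2)} :=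
  mobiusT_image_hemisphere_general m p hp t ht
end
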